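/- Consider the tridiagonal operator A on l²(ℤ) defined, for parameters α ∈ ℝ and β ≥ 0, by (Av)_i = (α−β)v_{i−1} + (1+2β)v_i − (α+β)v_{i+1}. Then A is invertible as a bounded operator on l²(ℤ) and ‖A^{-1}‖ ≤ 1. -/

import Mathlib

/-!
Let `S` be the shift `(S v)ᵢ = vᵢ₊₁`, a unitary operator on `ℓ²(ℤ)`. Then
`A = 1 + α (S⁻¹ - S) + β (2 - S - S⁻¹)`. The `α`-part is skew-adjoint, so it contributes nothing
to `⟪A v, v⟫`, while the `β`-part contributes `2β (‖v‖² - ⟪S v, v⟫) ≥ 0` by Cauchy–Schwarz.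
Hence `‖v‖² ≤ ⟪A v, v⟫`, and Lax–Milgram makes `A` invertible with `‖A⁻¹‖ ≤ 1`.
-/

open ENNReal
open scoped RealInnerProductSpace

section Reindex

variable {ι ι' E : Type*} [NormedAddCommGroup E] {p : ℝ≥0∞}

theorem Memℓp.comp_equiv {f : ι' → E} (hf : Memℓp f p) (e : ι ≃ ι') : Memℓp (f ∘ e) p := by
  rcases p.trichotomy with rfl | rfl | hp
  · rw [memℓp_zero_iff] at hf ⊢
    exact hf.preimage e.injective.injOn
  · rw [memℓp_infty_iff] at hf ⊢
    convert hf using 1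
    exact e.surjective.range_comp fun i => ‖f i‖
  · rw [memℓp_gen_iff hp] at hf ⊢
    exact e.summable_iff.2 hf

theorem lp.norm_comp_equiv [Fact (1 ≤ p)] (f : lp (fun _ : ι' => E) p) (e : ι ≃ ι')
    (g : lp (fun _ : ι => E) p) (hg : ⇑g = f ∘ e) : ‖g‖ = ‖f‖ := by
  rcases eq_or_ne p ∞ with rfl | hp
  · simp only [lp.norm_eq_ciSup, hg, iSup]
    exact congrArg sSup (e.surjective.range_comp fun i => ‖f i‖)
  · have hp : 0 < p.toReal := ENNReal.toReal_pos (zero_lt_one.trans_le Fact.out).ne' hp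
    rw [lp.norm_eq_tsum_rpow hp, lp.norm_eq_tsum_rpow hp, hg]
    exact congrArg (· ^ _) (e.tsum_eq fun i => ‖f i‖ ^ p.toReal)

variable (𝕜 : Type*) [NormedField 𝕜] [NormedSpace 𝕜 E] [Fact (1 ≤ p)]

noncomputable def lp.reindex (e : ι ≃ ι') : lp (fun _ : ι' => E) p ≃ₗᵢ[𝕜] lp (fun _ : ι => E) p where
  toFun f := ⟨f ∘ e, (lp.memℓp f).comp_equiv e⟩
  invFun g := ⟨g ∘ e.symm, (lp.memℓp g).comp_equiv e.symm⟩
  map_add' _ _ := rfl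
  map_smul' _ _ := rfl
  left_inv f := lp.ext (funext fun i => congrArg f (e.apply_symm_apply i))
  right_inv g := lp.ext (funext fun i => congrArg g (e.symm_apply_apply i))
  norm_map' f := lp.norm_comp_equiv f e _ rfl

@[simp]
theorem lp.reindex_apply (e : ι ≃ ι') (f : lp (fun _ : ι' => E) p) (i : ι) :
    lp.reindex 𝕜 e f i = f (e i) := rfl

@[simp]
theorem lp.reindex_symm_apply (e : ι ≃ ι') (g : lp (fun _ : ι => E) p) (i : ι') :
    (lp.reindex 𝕜 e).symm g i = g (e.symm i) := rfl

end Reindex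

section Coercive

variable {V : Type*} [NormedAddCommGroup V] [InnerProductSpace ℝ V]

theorem LinearIsometryEquiv.real_inner_symm_apply_self (S : V ≃ₗᵢ[ℝ] V) (v : V) :
    ⟪S.symm v, v⟫ = ⟪S v, v⟫ := by
  rw [← S.inner_map_map, S.apply_symm_apply, real_inner_comm]

theorem LinearIsometryEquiv.real_inner_apply_self_le (S : V ≃ₗᵢ[ℝ] V) (v : V) :
    ⟪S v, v⟫ ≤ ‖v‖ ^ 2 :=
  (real_inner_le_norm _ _).trans_eq (by rw [S.norm_map, sq])

theorem norm_sq_le_inner_tridiag (S : V ≃ₗᵢ[ℝ] V) (α : ℝ) {β : ℝ} (hβ : 0 ≤ β) (v : V) :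
    ‖v‖ ^ 2 ≤ ⟪(α - β) • S.symm v + (1 + 2 * β) • v - (α + β) • S v, v⟫ := by
  have hform : ⟪(α - β) • S.symm v + (1 + 2 * β) • v - (α + β) • S v, v⟫ =
      ‖v‖ ^ 2 + 2 * β * (‖v‖ ^ 2 - ⟪S v, v⟫) := by
    rw [inner_sub_left, inner_add_left, real_inner_smul_left, real_inner_smul_left,
      real_inner_smul_left, S.real_inner_symm_apply_self, real_inner_self_eq_norm_sq]
    ring
  rw [hform]
  exact le_add_of_nonneg_right <|
    mul_nonneg (by positivity) (sub_nonneg.2 (S.real_inner_apply_self_le v))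

variable [CompleteSpace V]

theorem ContinuousLinearMap.exists_inverse_of_coercive (A : V →L[ℝ] V) {c : ℝ} (hc : 0 < c)
    (hA : ∀ v, c * ‖v‖ ^ 2 ≤ ⟪A v, v⟫) :
    ∃ B : V →L[ℝ] V, A.comp B = .id ℝ V ∧ B.comp A = .id ℝ V ∧ ‖B‖ ≤ c⁻¹ := by
  have hcoercive : IsCoercive ((innerSL ℝ).comp A) :=
    ⟨c, hc, fun v => by simpa [mul_assoc, ← sq] using hA v⟩
  set E := hcoercive.continuousLinearEquivOfBilin
  have hAE : ∀ v, A v = E v := fun v => hcoercive.unique_continuousLinearEquivOfBilin fun _ => rfl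
  have hbelow : ∀ v, c * ‖v‖ ≤ ‖A v‖ := by
    intro v
    rcases (norm_nonneg v).eq_or_lt with hv | hv
    · simp [← hv]
    refine le_of_mul_le_mul_right ?_ hv
    calc c * ‖v‖ * ‖v‖ = c * ‖v‖ ^ 2 := by ring
      _ ≤ ⟪A v, v⟫ := hA v
      _ ≤ ‖A v‖ * ‖v‖ := real_inner_le_norm _ _
  refine ⟨E.symm, ?_, ?_, ?_⟩
  · ext y
    simp [hAE]
  · ext v
    simp [hAE]
  · refine ContinuousLinearMap.opNorm_le_bound _ (inv_nonneg.2 hc.le) fun y => ?_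
    rw [inv_mul_eq_div, le_div_iff₀' hc]
    simpa [hAE] using hbelow (E.symm y)

end Coercive

theorem tridiag_centered_invertible_l2
    (α β : ℝ) (hβ : 0 ≤ β)
    (A : lp (fun _ : ℤ => ℝ) 2 →L[ℝ] lp (fun _ : ℤ => ℝ) 2)
    (hA : ∀ (v : lp (fun _ : ℤ => ℝ) 2) (i : ℤ),
      (A v : ∀ _ : ℤ, ℝ) i =
        (α - β) * (v : ∀ _ : ℤ, ℝ) (i - 1) + (1 + 2 * β) * (v : ∀ _ : ℤ, ℝ) i
          - (α + β) * (v : ∀ _ : ℤ, ℝ) (i + 1)) :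
    ∃ B : lp (fun _ : ℤ => ℝ) 2 →L[ℝ] lp (fun _ : ℤ => ℝ) 2,
      A.comp B = ContinuousLinearMap.id ℝ _ ∧
      B.comp A = ContinuousLinearMap.id ℝ _ ∧
      ‖B‖ ≤ 1 := by
  set S := lp.reindex (E := ℝ) (p := 2) ℝ (Equiv.addRight (1 : ℤ))
  have hAS : ∀ v, A v = (α - β) • S.symm v + (1 + 2 * β) • v - (α + β) • S v := fun v =>
    lp.ext <| funext fun i => by
      simp only [hA, lp.coeFn_sub, lp.coeFn_add, lp.coeFn_smul, Pi.sub_apply, Pi.add_apply,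
        Pi.smul_apply, smul_eq_mul, S, lp.reindex_apply, lp.reindex_symm_apply,
        Equiv.coe_addRight, Equiv.addRight_symm, ← sub_eq_add_neg]
  simpa using A.exists_inverse_of_coercive one_pos fun v => by
    simpa [hAS] using norm_sq_le_inner_tridiag S α hβ v
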